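/- arXiv:1509.01175 — 6 statements merged into one kernel-verified Lean document; each statement's English description precedes it below -/
import Mathlib

section
/- For every H ∈ (0,1), the following integral identity holds: (1/Γ(H+1/2)²) [ ∫₀^∞ ( (1+s)^{H−1/2} − s^{H−1/2} )² ds + 1/(2H) ] = 1/( Γ(2H+1) sin(πH) ). (In particular the integral on the left is finite.) -/
/-!
Write `a = H - 1/2` and `K_a(s) = (1 + s)^a - s^a`. For `a ≠ 0` there is an explicit `G`, equal to
`1` at `0` and vanishing at infinity, whose derivative is `(2a + 1) K_a²` plus a multiple of a
Beta integrand `s^(p-1) (1 + s)^(-(p+q))`: `G = K_a K_(a+1)` if `a > 0`, and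
`G = (1 + s)^(2a+1) + s^(2a+1) - 2 s^(a+1) (1 + s)^a` if `a < 0`. Integrating `G'` over
`(0, ∞)` gives `(2a + 1) ∫ K_a² + 1 = Γ(a+1) Γ(1-2a) / Γ(1-a)` in both cases, and Euler's
reflection formula at `2H` and at `H + 1/2` turns this into the stated normalization.
-/

open MeasureTheory Real Set Filter Topology Asymptotics

namespace FBM

theorem integral_Ioo_rpow_mul_one_sub_rpow {p q : ℝ} (hp : 0 < p) (hq : 0 < q) :
    ∫ t in Ioo (0:ℝ) 1, t ^ (p - 1) * (1 - t) ^ (q - 1)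
      = Gamma p * Gamma q / Gamma (p + q) := by
  have h := Complex.betaIntegral_eq_Gamma_mul_div p q (by simpa) (by simpa)
  rw [← Complex.ofReal_add, Complex.Gamma_ofReal, Complex.Gamma_ofReal, Complex.Gamma_ofReal,
    Complex.betaIntegral, intervalIntegral.integral_of_le zero_le_one,
    integral_Ioc_eq_integral_Ioo] at h
  rw [← Complex.ofReal_inj, ← integral_complex_ofReal]
  push_cast
  rw [← h]
  refine setIntegral_congr_fun measurableSet_Ioo fun t ht => ?_
  have h1 : (0:ℝ) ≤ 1 - t := by linarith [ht.2]
  push_cast [Complex.ofReal_cpow ht.1.le, Complex.ofReal_cpow h1]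
  rfl

theorem image_div_one_sub_Ioo : (fun t : ℝ => t / (1 - t)) '' Ioo 0 1 = Ioi 0 := by
  ext s
  constructor
  · rintro ⟨t, ht, rfl⟩
    exact div_pos ht.1 (sub_pos.2 ht.2)
  · intro hs
    have hs' : 0 < 1 + s := by linarith [mem_Ioi.1 hs]
    refine ⟨s / (1 + s), ⟨div_pos hs hs', (div_lt_one hs').2 (by linarith)⟩, ?_⟩
    field_simp
    ring

theorem integral_Ioi_rpow_mul_one_add_rpow {p q : ℝ} (hp : 0 < p) (hq : 0 < q) :
    ∫ s in Ioi (0:ℝ), s ^ (p - 1) * (1 + s) ^ (-(p + q))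
      = Gamma p * Gamma q / Gamma (p + q) := by
  have hderiv : ∀ t ∈ Ioo (0:ℝ) 1,
      HasDerivWithinAt (fun t => t / (1 - t)) (1 / (1 - t) ^ 2) (Ioo 0 1) t := fun t ht => by
    have h1 : 1 - t ≠ 0 := (sub_pos.2 ht.2).ne'
    exact (((hasDerivAt_id' t).div ((hasDerivAt_id' t).const_sub 1) h1).congr_deriv
      (by field_simp; ring)).hasDerivWithinAt
  have hinj : InjOn (fun t : ℝ => t / (1 - t)) (Ioo 0 1) := fun x hx y hy hxy => by
    have := (sub_pos.2 hx.2).ne'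
    have := (sub_pos.2 hy.2).ne'
    field_simp at hxy
    linarith
  rw [← image_div_one_sub_Ioo, integral_image_eq_integral_abs_deriv_smul measurableSet_Ioo
    hderiv hinj, ← integral_Ioo_rpow_mul_one_sub_rpow hp hq]
  refine setIntegral_congr_fun measurableSet_Ioo fun t ht => ?_
  have h1 : 0 < 1 - t := sub_pos.2 ht.2
  have h2 : 1 + t / (1 - t) = (1 - t)⁻¹ := by field_simp; ring
  rw [smul_eq_mul, abs_of_pos (by positivity), h2, div_rpow ht.1.le h1.le, inv_rpow h1.le,
    ← rpow_neg h1.le, neg_neg]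
  rw [show p + q = (p - 1) + (q - 1) + 2 by ring, rpow_add h1, rpow_add h1, rpow_two]
  field_simp

theorem integrableOn_Ioi_rpow_mul_one_add_rpow {p q : ℝ} (hp : 0 < p) (hq : 0 < q) :
    IntegrableOn (fun s : ℝ => s ^ (p - 1) * (1 + s) ^ (-(p + q))) (Ioi 0) :=
  .of_integral_ne_zero <| by
    rw [integral_Ioi_rpow_mul_one_add_rpow hp hq]
    have := Gamma_pos_of_pos hp
    have := Gamma_pos_of_pos hq
    have := Gamma_pos_of_pos (add_pos hp hq)
    positivity

noncomputable def kernel (a s : ℝ) : ℝ := (1 + s) ^ a - s ^ a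

theorem hasDerivAt_kernel (a : ℝ) {s : ℝ} (hs : 0 < s) :
    HasDerivAt (kernel a) (a * kernel (a - 1) s) s := by
  have h1 := ((hasDerivAt_id' s).const_add 1).rpow_const (p := a) (Or.inl (by linarith))
  have h2 := hasDerivAt_rpow_const (p := a) (Or.inl hs.ne')
  exact (h1.sub h2).congr_deriv (by rw [kernel]; ring)

theorem continuousOn_kernel (a : ℝ) : ContinuousOn (kernel a) (Ioi 0) := fun _ hs =>
  (hasDerivAt_kernel a hs).continuousAt.continuousWithinAt

theorem continuous_kernel {a : ℝ} (ha : 0 ≤ a) : Continuous (kernel a) :=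
  ((continuous_const.add continuous_id).rpow_const fun _ => Or.inr ha).sub
    (continuous_id.rpow_const fun _ => Or.inr ha)

theorem kernel_sub_one_mul_kernel_add_one (a : ℝ) {s : ℝ} (hs : 0 < s) :
    kernel (a - 1) s * kernel (a + 1) s = kernel a s ^ 2 - s ^ (a - 1) * (1 + s) ^ (a - 1) := by
  have hs' : 1 + s ≠ 0 := by linarith
  simp only [kernel, rpow_sub_one hs.ne', rpow_sub_one hs', rpow_add_one hs.ne', rpow_add_one hs']
  field_simp
  ring

theorem tendsto_kernel_div_rpow (a : ℝ) :
    Tendsto (fun s => kernel a s / s ^ (a - 1)) atTop (𝓝 a) := by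
  have hd : HasDerivAt (fun u : ℝ => (1 + u) ^ a) a 0 := by
    simpa using ((hasDerivAt_id' (0:ℝ)).const_add 1).rpow_const (p := a) (Or.inl (by norm_num))
  have h := (hasDerivAt_iff_tendsto_slope.mp hd).comp
    (tendsto_inv_atTop_nhdsGT_zero.mono_right (nhdsWithin_mono 0 fun _ hx => ne_of_gt hx))
  refine h.congr' ?_
  filter_upwards [eventually_gt_atTop 0] with s hs
  have hsplit : (1 + s) ^ a = s ^ a * (1 + s⁻¹) ^ a := by
    rw [← mul_rpow hs.le (by positivity), mul_add, mul_inv_cancel₀ hs.ne', mul_one, add_comm]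
  simp only [Function.comp_apply, slope_def_field, kernel, hsplit, rpow_sub_one hs.ne']
  field_simp
  simp

theorem isBigO_kernel_atTop (a : ℝ) : kernel a =O[atTop] fun s => s ^ (a - 1) := by
  refine isBigO_of_div_tendsto_nhds ?_ a (tendsto_kernel_div_rpow a)
  filter_upwards [eventually_gt_atTop 0] with s hs h
  exact absurd h (rpow_pos_of_pos hs _).ne'

theorem integrableOn_kernel_sq {a : ℝ} (ha : -(1 / 2) < a) (ha' : a < 1 / 2) :
    IntegrableOn (fun s => kernel a s ^ 2) (Ioi 0) := by
  have hcont : ContinuousOn (fun s => kernel a s ^ 2) (Ioi 0) := (continuousOn_kernel a).pow 2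
  rw [← Ioc_union_Ioi_eq_Ioi zero_le_one]
  refine IntegrableOn.union ?_ ?_
  · have hdom :
        IntegrableOn (fun s : ℝ => 2 * ((1 + s) ^ a) ^ 2 + 2 * s ^ (2 * a)) (Ioc 0 1) := by
      refine Integrable.add ?_ ?_
      · refine (ContinuousOn.integrableOn_Icc ?_).mono_set Ioc_subset_Icc_self
        refine continuousOn_const.mul ((ContinuousOn.rpow_const (by fun_prop) fun s hs => ?_).pow 2)
        exact Or.inl (by linarith [hs.1])
      · exact ((intervalIntegrable_iff_integrableOn_Ioc_of_le zero_le_one).mp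
          (intervalIntegral.intervalIntegrable_rpow' (by linarith))).const_mul 2
    refine hdom.mono' ((hcont.mono Ioc_subset_Ioi_self).aestronglyMeasurable measurableSet_Ioc) ?_
    refine (ae_restrict_iff' measurableSet_Ioc).2 (Eventually.of_forall fun s hs => ?_)
    have hsq : s ^ (2 * a) = (s ^ a) ^ 2 := by
      rw [mul_comm, rpow_mul hs.1.le, rpow_two]
    rw [norm_pow, Real.norm_eq_abs, sq_abs, kernel, hsq]
    nlinarith [sq_nonneg ((1 + s) ^ a + s ^ a)]
  · have hO : (fun s => kernel a s ^ 2) =O[atTop] fun s => s ^ (2 * a - 2) := by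
      refine ((isBigO_kernel_atTop a).pow 2).trans_eventuallyEq ?_
      filter_upwards [eventually_gt_atTop 0] with s hs
      rw [← rpow_two, ← rpow_mul hs.le]
      ring_nf
    have hloc := (hcont.mono (Ici_subset_Ioi.2 one_pos)).locallyIntegrableOn (μ := volume)
      measurableSet_Ici
    exact (hloc.integrableOn_of_isBigO_atTop hO ⟨Ioi 1, Ioi_mem_atTop 1,
      integrableOn_Ioi_rpow_of_lt (by linarith) one_pos⟩).mono_set Ioi_subset_Ici_self

theorem integral_kernel_sq_of_hasDerivAt {a c d p q : ℝ} {G : ℝ → ℝ}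
    (ha : -(1 / 2) < a) (ha' : a < 1 / 2) (hp : 0 < p) (hq : 0 < q)
    (hG0 : ContinuousWithinAt G (Ici 0) 0)
    (hG : ∀ s ∈ Ioi (0:ℝ),
      HasDerivAt G (c * kernel a s ^ 2 + d * (s ^ (p - 1) * (1 + s) ^ (-(p + q)))) s)
    (hGtop : Tendsto G atTop (𝓝 0)) :
    c * (∫ s in Ioi 0, kernel a s ^ 2) + d * (Gamma p * Gamma q / Gamma (p + q)) = -G 0 := by
  have hint1 := (integrableOn_kernel_sq ha ha').const_mul c
  have hint2 := (integrableOn_Ioi_rpow_mul_one_add_rpow hp hq).const_mul d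
  have h := integral_Ioi_of_hasDerivAt_of_tendsto hG0 hG (hint1.add hint2) hGtop
  rw [integral_add hint1 hint2, integral_const_mul, integral_const_mul,
    integral_Ioi_rpow_mul_one_add_rpow hp hq] at h
  linarith

theorem integral_kernel_sq_of_pos {a : ℝ} (ha : 0 < a) (ha' : a < 1 / 2) :
    (2 * a + 1) * (∫ s in Ioi 0, kernel a s ^ 2) + 1
      = Gamma (a + 1) * Gamma (1 - 2 * a) / Gamma (1 - a) := by
  have hderiv : ∀ s ∈ Ioi (0:ℝ), HasDerivAt (kernel a * kernel (a + 1))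
      ((2 * a + 1) * kernel a s ^ 2 + -a * (s ^ (a - 1) * (1 + s) ^ (-(a + (1 - 2 * a))))) s := by
    intro s hs
    refine ((hasDerivAt_kernel a hs).mul (hasDerivAt_kernel (a + 1) hs)).congr_deriv ?_
    rw [add_sub_cancel_right, mul_assoc, kernel_sub_one_mul_kernel_add_one a hs,
      show -(a + (1 - 2 * a)) = a - 1 by ring]
    ring
  have hlim : Tendsto (kernel a * kernel (a + 1)) atTop (𝓝 0) := by
    refine ((isBigO_kernel_atTop a).mul (isBigO_kernel_atTop (a + 1))).trans_tendsto ?_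
    refine (tendsto_rpow_neg_atTop (by linarith : 0 < 1 - 2 * a)).congr' ?_
    filter_upwards [eventually_gt_atTop 0] with s hs
    rw [← rpow_add hs]
    ring_nf
  have h := integral_kernel_sq_of_hasDerivAt (by linarith) ha' ha (by linarith : 0 < 1 - 2 * a)
    ((continuous_kernel ha.le).mul (continuous_kernel (by linarith))).continuousWithinAt
    hderiv hlim
  have hG0 : (kernel a * kernel (a + 1)) 0 = 1 := by
    simp [kernel, zero_rpow ha.ne', zero_rpow (by linarith : a + 1 ≠ 0)]
  rw [hG0, show a + (1 - 2 * a) = 1 - a by ring] at h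
  rw [Gamma_add_one ha.ne']
  linear_combination h

theorem integral_kernel_sq_of_neg {a : ℝ} (ha : -(1 / 2) < a) (ha' : a < 0) :
    (2 * a + 1) * (∫ s in Ioi 0, kernel a s ^ 2) + 1
      = Gamma (a + 1) * Gamma (1 - 2 * a) / Gamma (1 - a) := by
  set G : ℝ → ℝ :=
    fun s => (1 + s) ^ (2 * a + 1) + s ^ (2 * a + 1) - 2 * (s ^ (a + 1) * (1 + s) ^ a)
  have hderiv : ∀ s ∈ Ioi (0:ℝ), HasDerivAt G ((2 * a + 1) * kernel a s ^ 2
      + 2 * a * (s ^ (a + 1 - 1) * (1 + s) ^ (-(a + 1 + -(2 * a))))) s := by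
    intro s hs
    have hs' : 0 < 1 + s := by linarith [mem_Ioi.1 hs]
    have d1 := ((hasDerivAt_id' s).const_add 1).rpow_const (p := 2 * a + 1) (Or.inl hs'.ne')
    have d2 := hasDerivAt_rpow_const (x := s) (p := 2 * a + 1) (Or.inl (ne_of_gt hs))
    have d3 := hasDerivAt_rpow_const (x := s) (p := a + 1) (Or.inl (ne_of_gt hs))
    have d4 := ((hasDerivAt_id' s).const_add 1).rpow_const (p := a) (Or.inl hs'.ne')
    refine ((d1.add d2).sub ((d3.mul d4).const_mul 2)).congr_deriv ?_
    rw [show -(a + 1 + -(2 * a)) = a - 1 by ring, add_sub_cancel_right, add_sub_cancel_right,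
      two_mul, rpow_add hs, rpow_add hs', rpow_sub_one hs'.ne', rpow_add_one hs.ne', kernel]
    field_simp
    ring
  have hcont : ContinuousAt G 0 := by
    simp only [G]
    fun_prop (disch := first | (right; linarith) | norm_num)
  have hlim : Tendsto G atTop (𝓝 0) := by
    have hO : G =O[atTop] fun s => s ^ (2 * a) := by
      have h1 : kernel (2 * a + 1) =O[atTop] fun s => s ^ (2 * a) := by
        simpa using isBigO_kernel_atTop (2 * a + 1)
      have h2 : (fun s => s ^ (a + 1) * kernel a s) =O[atTop] fun s => s ^ (2 * a) := by
        refine ((isBigO_refl _ atTop).mul (isBigO_kernel_atTop a)).trans_eventuallyEq ?_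
        filter_upwards [eventually_gt_atTop 0] with s hs
        rw [← rpow_add hs]
        ring_nf
      refine (h1.sub (h2.const_mul_left 2)).congr' ?_ EventuallyEq.rfl
      filter_upwards [eventually_gt_atTop 0] with s hs
      simp only [G, kernel]
      rw [two_mul a, add_assoc, rpow_add hs, rpow_add_one hs.ne']
      ring
    exact hO.trans_tendsto (by simpa using tendsto_rpow_neg_atTop (by linarith : 0 < -(2 * a)))
  have h := integral_kernel_sq_of_hasDerivAt ha (by linarith) (by linarith : 0 < a + 1)
    (by linarith : 0 < -(2 * a)) hcont.continuousWithinAt hderiv hlim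
  have hG0 : G 0 = 1 := by
    simp [G, zero_rpow (by linarith : 2 * a + 1 ≠ 0), zero_rpow (by linarith : a + 1 ≠ 0)]
  rw [hG0, show a + 1 + -(2 * a) = 1 - a by ring] at h
  rw [show 1 - 2 * a = -(2 * a) + 1 by ring, Gamma_add_one (s := -(2 * a)) (by linarith)]
  linear_combination h

theorem integral_kernel_sq {a : ℝ} (ha : -(1 / 2) < a) (ha' : a < 1 / 2) :
    (2 * a + 1) * (∫ s in Ioi 0, kernel a s ^ 2) + 1
      = Gamma (a + 1) * Gamma (1 - 2 * a) / Gamma (1 - a) := by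
  rcases lt_trichotomy a 0 with h | rfl | h
  · exact integral_kernel_sq_of_neg ha h
  · simp [kernel]
  · exact integral_kernel_sq_of_pos h ha'

theorem Gamma_two_sub_two_mul_mul_Gamma_two_mul_add_one_mul_sin {H : ℝ}
    (hH : ∀ n : ℤ, (n : ℝ) ≠ 2 * H) :
    Gamma (2 - 2 * H) * Gamma (2 * H + 1) * sin (π * H)
      = 2 * H * Gamma (3 / 2 - H) * Gamma (H + 1 / 2) := by
  have hsin : sin (π * (2 * H)) ≠ 0 :=
    sin_ne_zero_iff.2 fun n hn => hH n (mul_right_cancel₀ pi_ne_zero (by linarith))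
  rw [mul_left_comm, sin_two_mul] at hsin
  have hcos : cos (π * H) ≠ 0 := right_ne_zero_of_mul hsin
  have h0 : 2 * H ≠ 0 := by simpa [eq_comm] using hH 0
  have h1 : 1 - 2 * H ≠ 0 := fun h => hH 1 (by push_cast; linarith)
  have hrefl₁ := Gamma_mul_Gamma_one_sub (2 * H)
  rw [mul_left_comm, sin_two_mul, eq_div_iff hsin] at hrefl₁
  have hrefl₂ := Gamma_mul_Gamma_one_sub (H + 1 / 2)
  rw [show 1 - (H + 1 / 2) = 1 / 2 - H by ring, mul_add, show π * (1 / 2) = π / 2 by ring,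
    sin_add_pi_div_two, eq_div_iff hcos] at hrefl₂
  rw [show 2 - 2 * H = (1 - 2 * H) + 1 by ring, Gamma_add_one h1, Gamma_add_one h0,
    show 3 / 2 - H = (1 / 2 - H) + 1 by ring, Gamma_add_one (by contrapose! h1; linarith)]
  refine mul_right_cancel₀ hcos ?_
  linear_combination (H * (1 - 2 * H)) * hrefl₁ - (2 * H * (1 / 2 - H)) * hrefl₂

end FBM

theorem fbm_variance_normalization (H : ℝ) (hH : H ∈ Set.Ioo (0:ℝ) 1) :
    IntegrableOn (fun s : ℝ => ((1 + s) ^ (H - 1/2) - s ^ (H - 1/2)) ^ 2) (Set.Ioi 0) ∧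
    (1 / Real.Gamma (H + 1/2) ^ 2) *
      ((∫ s in Set.Ioi (0:ℝ), ((1 + s) ^ (H - 1/2) - s ^ (H - 1/2)) ^ 2) + 1 / (2 * H)) =
      1 / (Real.Gamma (2 * H + 1) * Real.sin (π * H)) := by
  obtain ⟨h0, h1⟩ := hH
  refine ⟨FBM.integrableOn_kernel_sq (a := H - 1/2) (by linarith) (by linarith), ?_⟩
  rcases eq_or_ne H (1/2) with rfl | hne
  · norm_num [mul_one_div]
  have hI := FBM.integral_kernel_sq (a := H - 1/2) (by linarith) (by linarith)
  unfold FBM.kernel at hI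
  rw [show 2 * (H - 1/2) + 1 = 2 * H by ring, show H - 1/2 + 1 = H + 1/2 by ring,
    show 1 - 2 * (H - 1/2) = 2 - 2 * H by ring, show 1 - (H - 1/2) = 3/2 - H by ring,
    eq_div_iff (Gamma_pos_of_pos (by linarith)).ne'] at hI
  have h2H : ∀ n : ℤ, (n : ℝ) ≠ 2 * H := fun n hn => hne <| by
    obtain rfl : n = 1 := by
      have : (0:ℤ) < n := by exact_mod_cast (by linarith : (0:ℝ) < n)
      have : n < 2 := by exact_mod_cast (by linarith : (n:ℝ) < 2)
      omega
    push_cast at hn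
    linarith
  have hΓ := FBM.Gamma_two_sub_two_mul_mul_Gamma_two_mul_add_one_mul_sin h2H
  have hB := Gamma_pos_of_pos (by linarith : 0 < 3/2 - H)
  have hS := sin_pos_of_pos_of_lt_pi (by positivity : 0 < π * H) (by nlinarith [pi_pos])
  have hinv : 2 * H * (1 / (2 * H)) = 1 := by field_simp
  rw [one_div_mul_eq_div, div_eq_div_iff (by positivity) (by positivity)]
  refine mul_left_cancel₀ (mul_ne_zero (by positivity : 2 * H ≠ 0) hB.ne') ?_
  linear_combination Gamma (2 * H + 1) * sin (π * H) * hI + Gamma (H + 1/2) * hΓ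
    + Gamma (3/2 - H) * Gamma (2 * H + 1) * sin (π * H) * hinv
end

section
/- Fix a > 0 and H ∈ (0,1/2). The kernel K belongs to L¹(0,∞), i.e. ∫₀^∞ |K(t)| dt < ∞. -/
open MeasureTheory Real Set

/-- The moving-average kernel of the fractional Ornstein–Uhlenbeck process. -/
noncomputable def fouKernel (a H : ℝ) (t : ℝ) : ℝ :=
  (1 / Real.Gamma (H + 1/2)) *
    (t ^ (H - 1/2) - a * ∫ s in (0:ℝ)..t, (t - s) ^ (H - 1/2) * Real.exp (-a * s))

/-!
Write `β = H - 1/2 ∈ (-1, 0)`. Since `a ∫₀ᵗ e^{-as} ds = 1 - e^{-at}`,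
`t^β - a ∫₀ᵗ (t-s)^β e^{-as} ds = t^β e^{-at} - a J(t)` with
`J(t) = ∫₀ᵗ ((t-s)^β - t^β) e^{-as} ds ≥ 0`, and it suffices to show `J ∈ L¹(0, ∞)`.
Near `0`, `J(t) ≤ ∫₀ᵗ (t-s)^β ds = t^(β+1)/(β+1)`. At infinity, monotonicity of `x ↦ x^(β+1)`
gives `(t-s)^β - t^β ≤ (s/t) (t-s)^β`; splitting at `s = t/2` yields
`J(t) ≲ t^(β-1) + t^(β+1) e^{-at/2}`, which is integrable on `(1, ∞)` because `β < 0`.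
-/

open intervalIntegral

section

variable {a β s t : ℝ}

lemma integrableOn_rpow_mul_exp_neg_mul (hβ : -1 < β) (ha : 0 < a) :
    IntegrableOn (fun x : ℝ => x ^ β * exp (-a * x)) (Ioi 0) := by
  simpa using integrableOn_rpow_mul_exp_neg_mul_rpow hβ one_pos ha

lemma integrableOn_mul_exp_neg_mul (ha : 0 < a) :
    IntegrableOn (fun x : ℝ => x * exp (-a * x)) (Ioi 0) := by
  simpa using integrableOn_rpow_mul_exp_neg_mul (β := 1) (by norm_num) ha

lemma integral_exp_neg_mul (ha : a ≠ 0) (t : ℝ) :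
    ∫ s in (0:ℝ)..t, exp (-a * s) = (1 - exp (-a * t)) / a := by
  rw [integral_comp_mul_left (fun x => exp x) (neg_ne_zero.2 ha), integral_exp]
  simp only [mul_zero, exp_zero, smul_eq_mul]
  field_simp
  ring

lemma intervalIntegrable_sub_rpow (hβ : -1 < β) (t : ℝ) :
    IntervalIntegrable (fun s => (t - s) ^ β) volume 0 t := by
  simpa using ((intervalIntegrable_rpow' hβ (a := 0) (b := t)).comp_sub_left t).symm

lemma integral_sub_rpow (hβ : -1 < β) (t : ℝ) :
    ∫ s in (0:ℝ)..t, (t - s) ^ β = t ^ (β + 1) / (β + 1) := by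
  rw [integral_comp_sub_left (fun x => x ^ β) t, sub_self, sub_zero,
    integral_rpow (Or.inl hβ), zero_rpow (by linarith), sub_zero]

lemma sub_rpow_sub_rpow_le (hβ : -1 ≤ β) (hs : 0 ≤ s) (hst : s < t) :
    (t - s) ^ β - t ^ β ≤ s / t * (t - s) ^ β := by
  have ht : 0 < t := hs.trans_lt hst
  have hmono : (t - s) ^ (β + 1) ≤ t ^ (β + 1) :=
    rpow_le_rpow (by linarith) (by linarith) (by linarith)
  rw [rpow_add_one (by linarith), rpow_add_one ht.ne'] at hmono
  rw [div_mul_eq_mul_div, le_div_iff₀ ht]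
  nlinarith

noncomputable def rpowExpConv (a β t : ℝ) : ℝ :=
  ∫ s in (0:ℝ)..t, (t - s) ^ β * exp (-a * s)

noncomputable def rpowDiffExpConv (a β t : ℝ) : ℝ :=
  ∫ s in (0:ℝ)..t, ((t - s) ^ β - t ^ β) * exp (-a * s)

lemma rpowExpConv_eq_exp_mul (a β t : ℝ) :
    rpowExpConv a β t = exp (-a * t) * ∫ u in (0:ℝ)..t, u ^ β * exp (a * u) := by
  have hsub := integral_comp_sub_left
    (fun u => exp (-a * t) * (u ^ β * exp (a * u))) (a := 0) (b := t) t
  rw [sub_self, sub_zero] at hsub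
  rw [rpowExpConv, ← intervalIntegral.integral_const_mul, ← hsub]
  refine integral_congr fun s _ => ?_
  rw [mul_left_comm, ← exp_add]
  ring_nf

lemma continuous_rpowExpConv (hβ : -1 < β) : Continuous (rpowExpConv a β) := by
  simp_rw [funext (rpowExpConv_eq_exp_mul a β)]
  have hexp : Continuous fun u => exp (a * u) := by fun_prop
  exact (by fun_prop : Continuous fun t => exp (-a * t)).mul (continuous_primitive
    (fun _ _ => (intervalIntegrable_rpow' hβ).mul_continuousOn hexp.continuousOn) 0)

lemma rpowDiffExpConv_eq (ha : a ≠ 0) (hβ : -1 < β) (t : ℝ) :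
    rpowDiffExpConv a β t = rpowExpConv a β t - t ^ β * ((1 - exp (-a * t)) / a) := by
  have hexp : Continuous fun s => exp (-a * s) := by fun_prop
  simp_rw [rpowDiffExpConv, sub_mul]
  rw [intervalIntegral.integral_sub
    ((intervalIntegrable_sub_rpow hβ t).mul_continuousOn hexp.continuousOn)
    ((hexp.intervalIntegrable 0 t).const_mul _), intervalIntegral.integral_const_mul,
    integral_exp_neg_mul ha, rpowExpConv]

lemma rpow_sub_mul_rpowExpConv (ha : a ≠ 0) (hβ : -1 < β) (t : ℝ) :
    t ^ β - a * rpowExpConv a β t = t ^ β * exp (-a * t) - a * rpowDiffExpConv a β t := by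
  rw [rpowDiffExpConv_eq ha hβ]
  field_simp
  ring

lemma continuousOn_rpowDiffExpConv (ha : a ≠ 0) (hβ : -1 < β) :
    ContinuousOn (rpowDiffExpConv a β) (Ioi 0) := by
  simp_rw [funext (rpowDiffExpConv_eq ha hβ)]
  exact (continuous_rpowExpConv hβ).continuousOn.sub
    ((continuousOn_id.rpow_const fun t ht => Or.inl (ne_of_gt ht)).mul (by fun_prop))

lemma intervalIntegrable_sub_rpow_sub_mul_exp (hβ : -1 < β) (a t : ℝ) :
    IntervalIntegrable (fun s => ((t - s) ^ β - t ^ β) * exp (-a * s)) volume 0 t :=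
  ((intervalIntegrable_sub_rpow hβ t).sub intervalIntegrable_const).mul_continuousOn
    (by fun_prop)

lemma rpowDiffExpConv_nonneg (hβ1 : -1 < β) (hβ0 : β ≤ 0) (ht : 0 ≤ t) :
    0 ≤ rpowDiffExpConv a β t := by
  -- At `s = t` the integrand is `-t ^ β * exp (-a * t) < 0`, as `0 ^ β = 0`: hence `Ioo`.
  calc (0:ℝ) = ∫ _ in (0:ℝ)..t, (0:ℝ) := integral_zero.symm
    _ ≤ rpowDiffExpConv a β t := integral_mono_on_of_le_Ioo ht intervalIntegrable_const
      (intervalIntegrable_sub_rpow_sub_mul_exp hβ1 a t) fun s hs =>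
        mul_nonneg (sub_nonneg.2 (rpow_le_rpow_of_nonpos (by linarith [hs.2])
          (by linarith [hs.1]) hβ0)) (exp_pos _).le

lemma rpowDiffExpConv_le_rpow (ha : 0 ≤ a) (hβ : -1 < β) (ht : 0 ≤ t) :
    rpowDiffExpConv a β t ≤ t ^ (β + 1) / (β + 1) := by
  rw [← integral_sub_rpow hβ t]
  refine integral_mono_on_of_le_Ioo ht (intervalIntegrable_sub_rpow_sub_mul_exp hβ a t)
    (intervalIntegrable_sub_rpow hβ t) fun s hs => ?_
  have hts : 0 ≤ (t - s) ^ β := rpow_nonneg (by linarith [hs.2]) β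
  calc ((t - s) ^ β - t ^ β) * exp (-a * s) ≤ (t - s) ^ β * exp (-a * s) :=
        mul_le_mul_of_nonneg_right (by linarith [rpow_nonneg ht β]) (exp_pos _).le
    _ ≤ (t - s) ^ β := mul_le_of_le_one_right hts
        (exp_le_one_iff.2 (by nlinarith [hs.1]))

lemma sub_rpow_sub_rpow_mul_exp_le (ha : 0 ≤ a) (hβ1 : -1 < β) (hβ0 : β ≤ 0) (hs : 0 ≤ s)
    (hst : s < t) :
    ((t - s) ^ β - t ^ β) * exp (-a * s) ≤
      2 ^ (-β) * t ^ (β - 1) * (s * exp (-a * s)) + (t - s) ^ β * exp (-(a / 2) * t) := by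
  have ht : 0 < t := hs.trans_lt hst
  have hts : 0 ≤ (t - s) ^ β := rpow_nonneg (by linarith) β
  have hfar : 0 ≤ (t - s) ^ β * exp (-(a / 2) * t) := by positivity
  have hnear : 0 ≤ 2 ^ (-β) * t ^ (β - 1) * (s * exp (-a * s)) := by positivity
  refine (mul_le_mul_of_nonneg_right (sub_rpow_sub_rpow_le hβ1.le hs hst)
    (exp_pos _).le).trans ?_
  rcases le_or_gt s (t / 2) with hhalf | hhalf
  · have hpow : (t - s) ^ β ≤ 2 ^ (-β) * t ^ β := by
      calc (t - s) ^ β ≤ (t / 2) ^ β := rpow_le_rpow_of_nonpos (by linarith) (by linarith) hβ0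
        _ = 2 ^ (-β) * t ^ β := by
          rw [div_rpow ht.le zero_le_two, rpow_neg zero_le_two]; ring
    have heq : 2 ^ (-β) * t ^ (β - 1) * (s * exp (-a * s))
        = s / t * (2 ^ (-β) * t ^ β) * exp (-a * s) := by
      rw [rpow_sub ht, rpow_one]; ring
    rw [heq]
    have := mul_le_mul_of_nonneg_right
      (mul_le_mul_of_nonneg_left hpow (div_nonneg hs ht.le)) (exp_pos (-a * s)).le
    linarith
  · have hexp : exp (-a * s) ≤ exp (-(a / 2) * t) := exp_le_exp.2 (by nlinarith)
    have hfrac : s / t ≤ 1 := (div_le_one ht).2 hst.le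
    have := mul_le_mul hfrac (mul_le_mul_of_nonneg_left hexp hts) (by positivity) zero_le_one
    nlinarith

lemma rpowDiffExpConv_le (ha : 0 < a) (hβ1 : -1 < β) (hβ0 : β ≤ 0) (ht : 0 < t) :
    rpowDiffExpConv a β t ≤ 2 ^ (-β) * (∫ s in Ioi 0, s * exp (-a * s)) * t ^ (β - 1)
      + t ^ (β + 1) * exp (-(a / 2) * t) / (β + 1) := by
  have hnear : IntervalIntegrable (fun s => 2 ^ (-β) * t ^ (β - 1) * (s * exp (-a * s)))
      volume 0 t := (by fun_prop : Continuous fun s => s * exp (-a * s)).intervalIntegrable 0 t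
      |>.const_mul _
  have hfar : IntervalIntegrable (fun s => (t - s) ^ β * exp (-(a / 2) * t)) volume 0 t :=
    (intervalIntegrable_sub_rpow hβ1 t).mul_const _
  have hmoment : ∫ s in (0:ℝ)..t, s * exp (-a * s) ≤ ∫ s in Ioi 0, s * exp (-a * s) := by
    rw [integral_of_le ht.le]
    exact setIntegral_mono_set (integrableOn_mul_exp_neg_mul ha)
      ((ae_restrict_iff' measurableSet_Ioi).2 (ae_of_all _ fun s hs =>
        mul_nonneg (le_of_lt hs) (exp_pos _).le))
      Ioc_subset_Ioi_self.eventuallyLE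
  calc rpowDiffExpConv a β t
      ≤ ∫ s in (0:ℝ)..t, (2 ^ (-β) * t ^ (β - 1) * (s * exp (-a * s))
          + (t - s) ^ β * exp (-(a / 2) * t)) :=
        integral_mono_on_of_le_Ioo ht.le (intervalIntegrable_sub_rpow_sub_mul_exp hβ1 a t)
          (hnear.add hfar) fun s hs =>
            sub_rpow_sub_rpow_mul_exp_le ha.le hβ1 hβ0 hs.1.le hs.2
    _ = 2 ^ (-β) * t ^ (β - 1) * (∫ s in (0:ℝ)..t, s * exp (-a * s))
          + t ^ (β + 1) / (β + 1) * exp (-(a / 2) * t) := by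
        rw [intervalIntegral.integral_add hnear hfar, intervalIntegral.integral_const_mul,
          intervalIntegral.integral_mul_const, integral_sub_rpow hβ1]
    _ ≤ _ := by
        rw [div_mul_eq_mul_div]
        nlinarith [mul_le_mul_of_nonneg_left hmoment
          (by positivity : (0:ℝ) ≤ 2 ^ (-β) * t ^ (β - 1))]

lemma integrableOn_rpowDiffExpConv (ha : 0 < a) (hβ1 : -1 < β) (hβ0 : β < 0) :
    IntegrableOn (rpowDiffExpConv a β) (Ioi 0) := by
  have hcont := continuousOn_rpowDiffExpConv ha.ne' hβ1
  rw [← Ioc_union_Ioi_eq_Ioi zero_le_one]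
  refine IntegrableOn.union ?_ ?_
  · have hdom : IntegrableOn (fun t => t ^ (β + 1) / (β + 1)) (Ioc 0 1) :=
      (intervalIntegrable_rpow' (by linarith) (a := 0) (b := 1)).1.div_const _
    refine hdom.mono' ((hcont.mono Ioc_subset_Ioi_self).aestronglyMeasurable measurableSet_Ioc)
      ((ae_restrict_iff' measurableSet_Ioc).2 (ae_of_all _ fun t ht => ?_))
    rw [norm_of_nonneg (rpowDiffExpConv_nonneg hβ1 hβ0.le ht.1.le)]
    exact rpowDiffExpConv_le_rpow ha.le hβ1 ht.1.le
  · have hdom : IntegrableOn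
        (fun t => 2 ^ (-β) * (∫ s in Ioi 0, s * exp (-a * s)) * t ^ (β - 1)
          + t ^ (β + 1) * exp (-(a / 2) * t) / (β + 1)) (Ioi 1) :=
      ((integrableOn_Ioi_rpow_of_lt (by linarith) one_pos).const_mul _).add
        (((integrableOn_rpow_mul_exp_neg_mul (by linarith) (half_pos ha)).mono_set
          (Ioi_subset_Ioi zero_le_one)).div_const _)
    refine hdom.mono' ((hcont.mono (Ioi_subset_Ioi zero_le_one)).aestronglyMeasurable
      measurableSet_Ioi) ((ae_restrict_iff' measurableSet_Ioi).2 (ae_of_all _ fun t ht => ?_))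
    have ht0 : (0:ℝ) < t := zero_lt_one.trans ht
    rw [norm_of_nonneg (rpowDiffExpConv_nonneg hβ1 hβ0.le ht0.le)]
    exact rpowDiffExpConv_le ha hβ1 hβ0.le ht0

end

theorem fouKernel_memL1 (a H : ℝ) (ha : 0 < a) (hH : H ∈ Set.Ioo (0:ℝ) (1/2)) :
    IntegrableOn (fouKernel a H) (Set.Ioi 0) := by
  have hβ1 : -1 < H - 1/2 := by linarith [hH.1]
  have hβ0 : H - 1/2 < 0 := by linarith [hH.2]
  have hdecomp : IntegrableOn (fun t => 1 / Gamma (H + 1/2) *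
      (t ^ (H - 1/2) * exp (-a * t) - a * rpowDiffExpConv a (H - 1/2) t)) (Ioi 0) :=
    ((integrableOn_rpow_mul_exp_neg_mul hβ1 ha).sub
      ((integrableOn_rpowDiffExpConv ha hβ1 hβ0).const_mul a)).const_mul _
  refine hdecomp.congr_fun (fun t _ => ?_) measurableSet_Ioi
  dsimp only
  rw [← rpow_sub_mul_rpowExpConv ha.ne' hβ1]
  rfl
end

section
/- Fix a > 0 and H ∈ (0,1). Then K(t) · Γ(H+1/2) · t^{1/2−H} → 1 as t → 0⁺; equivalently, K(t) = (1/(Γ(H+1/2) a^{H−1/2})) ( (a t)^{H−1/2} + o( (a t)^{H−1/2} ) ) as t → 0⁺. -/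
open MeasureTheory Real Set Filter Topology

theorem fouKernel_asymptotics_zero (a H : ℝ) (ha : 0 < a) (hH : H ∈ Set.Ioo (0:ℝ) 1) :
    Tendsto (fun t : ℝ => fouKernel a H t * Real.Gamma (H + 1/2) * t ^ (1/2 - H))
      (𝓝[>] 0) (𝓝 1) := by
  obtain ⟨hH0, hH1⟩ := hH
  have hΓ : Real.Gamma (H + 1/2) ≠ 0 :=
    (Real.Gamma_pos_of_pos (by linarith)).ne'
  set I : ℝ → ℝ := fun t => ∫ s in (0:ℝ)..t, (t - s) ^ (H - 1/2) * Real.exp (-a * s)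
    with hI
  -- rewrite the function on (0, ∞)
  have key : ∀ t ∈ Ioi (0:ℝ),
      fouKernel a H t * Real.Gamma (H + 1/2) * t ^ (1/2 - H)
        = 1 - a * (t ^ (1/2 - H) * I t) := by
    intro t ht
    have h1 : t ^ (H - 1/2) * t ^ (1/2 - H) = 1 := by
      rw [← Real.rpow_add ht]; norm_num
    have h2 : fouKernel a H t * Real.Gamma (H + 1/2) = t ^ (H - 1/2) - a * I t := by
      unfold fouKernel; simp only [hI]; field_simp
    rw [h2, sub_mul, h1]; ring
  -- bound on the integral for t > 0
  have hrpow : (-1 : ℝ) < H - 1/2 := by linarith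
  have hIle : ∀ t : ℝ, 0 < t → I t ≤ t ^ (H + 1/2) / (H + 1/2) := by
    intro t ht
    have hint2 : IntervalIntegrable (fun s : ℝ => (t - s) ^ (H - 1/2)) volume 0 t := by
      have := (intervalIntegral.intervalIntegrable_rpow' (a := 0) (b := t) hrpow).comp_sub_left t
      simpa using this.symm
    have hint1 : IntervalIntegrable
        (fun s : ℝ => (t - s) ^ (H - 1/2) * Real.exp (-a * s)) volume 0 t :=
      hint2.mul_continuousOn (Continuous.continuousOn (by continuity))
    have hmono : I t ≤ ∫ s in (0:ℝ)..t, (t - s) ^ (H - 1/2) := by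
      refine intervalIntegral.integral_mono_on ht.le hint1 hint2 ?_
      intro s hs
      have hs0 : 0 ≤ s := hs.1
      have hts : 0 ≤ t - s := sub_nonneg.2 hs.2
      have hexp : Real.exp (-a * s) ≤ 1 := by
        rw [Real.exp_le_one_iff]
        nlinarith
      exact mul_le_of_le_one_right (Real.rpow_nonneg hts _) hexp
    have hval : (∫ s in (0:ℝ)..t, (t - s) ^ (H - 1/2)) = t ^ (H + 1/2) / (H + 1/2) := by
      rw [intervalIntegral.integral_comp_sub_left (fun x => x ^ (H - 1/2)) t]
      simp only [sub_zero, sub_self]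
      rw [integral_rpow (Or.inl hrpow),
        Real.zero_rpow (show H - 1/2 + 1 ≠ 0 by intro h; linarith),
        show H - 1/2 + 1 = H + 1/2 by ring]
      ring
    linarith [hmono, hval.le, hval.ge]
  have hInonneg : ∀ t : ℝ, 0 < t → 0 ≤ I t := by
    intro t ht
    refine intervalIntegral.integral_nonneg ht.le ?_
    intro s hs
    exact mul_nonneg (Real.rpow_nonneg (sub_nonneg.2 hs.2) _) (Real.exp_nonneg _)
  -- the error term tends to 0
  have h0 : Tendsto (fun t : ℝ => a * (t ^ (1/2 - H) * I t)) (𝓝[>] 0) (𝓝 0) := by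
    have hupper : Tendsto (fun t : ℝ => a * t / (H + 1/2)) (𝓝[>] 0) (𝓝 0) := by
      have : Tendsto (fun t : ℝ => a * t / (H + 1/2)) (𝓝 0) (𝓝 (a * 0 / (H + 1/2))) :=
        Continuous.tendsto (by continuity) 0
      simpa using this.mono_left nhdsWithin_le_nhds
    refine tendsto_of_tendsto_of_tendsto_of_le_of_le' tendsto_const_nhds hupper ?_ ?_
    · filter_upwards [self_mem_nhdsWithin] with t ht
      exact mul_nonneg ha.le
        (mul_nonneg (Real.rpow_nonneg (le_of_lt ht) _) (hInonneg t ht))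
    · filter_upwards [self_mem_nhdsWithin] with t ht
      have ht : (0:ℝ) < t := ht
      have h1 : t ^ (1/2 - H) * t ^ (H + 1/2) = t := by
        rw [← Real.rpow_add ht, show (1/2 - H + (H + 1/2)) = 1 by ring, Real.rpow_one]
      have : t ^ (1/2 - H) * I t ≤ t / (H + 1/2) := by
        calc t ^ (1/2 - H) * I t
            ≤ t ^ (1/2 - H) * (t ^ (H + 1/2) / (H + 1/2)) := by
              exact mul_le_mul_of_nonneg_left (hIle t ht)
                (Real.rpow_nonneg ht.le _)
          _ = t / (H + 1/2) := by rw [mul_div_assoc'] at *; rw [h1]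
      calc a * (t ^ (1/2 - H) * I t) ≤ a * (t / (H + 1/2)) :=
            mul_le_mul_of_nonneg_left this ha.le
        _ = a * t / (H + 1/2) := by ring
  have hmain : Tendsto (fun t : ℝ => 1 - a * (t ^ (1/2 - H) * I t)) (𝓝[>] 0) (𝓝 1) := by
    have := (tendsto_const_nhds (x := (1:ℝ)) (f := 𝓝[>] (0:ℝ))).sub h0
    simpa using this
  refine hmain.congr' ?_
  filter_upwards [self_mem_nhdsWithin] with t ht
  exact (key t ht).symm
end

section
/- Fix a > 0 and H ∈ (0,1) with H ≠ 1/2. Then K(t) · Γ(H−1/2) · a · t^{3/2−H} → 1 as t → ∞; equivalently, K(t) = (1/(Γ(H−1/2) a^{H−1/2})) ( (a t)^{H−3/2} + o( (a t)^{H−3/2} ) ) as t → ∞. -/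
open MeasureTheory Real Set Filter Topology

/-!
With `α = H - 1/2` one has `Γ(H + 1/2) = α Γ(α)`, and the substitution `u = t - s` turns the
convolution in the kernel into `e^{-at} ∫₀ᵗ u^α e^{au} du`. Integrating by parts twice on `[1, t]`
gives, for some constant `C` and with `Y(t) = t^{1-α} e^{-at}`,
  `a t^{1-α} Γ(H + 1/2) K(t) = α + C Y(t) + α (1 - α) Y(t) ∫₁ᵗ u^{α-2} e^{au} du`.
Both error terms tend to `0`; for the last one split the integral at `t/2`, bounding the integrand
by `e^{at/2}` on `[1, t/2]` and by `(t/2)^{α-2} e^{au}` on `[t/2, t]`.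
-/

lemma intervalIntegrable_rpow_mul_exp (a β : ℝ) {c d : ℝ} (hc : 0 < c) (hd : 0 < d) :
    IntervalIntegrable (fun u ↦ u ^ β * exp (a * u)) volume c d :=
  ContinuousOn.intervalIntegrable <|
    (continuousOn_id.rpow_const fun u hu ↦ Or.inl ((lt_min hc hd).trans_le hu.1).ne').mul
      (by fun_prop)

lemma integral_exp_mul {a : ℝ} (ha : a ≠ 0) (c d : ℝ) :
    ∫ u in c..d, exp (a * u) = (exp (a * d) - exp (a * c)) / a := by
  rw [intervalIntegral.integral_comp_mul_left (fun u ↦ exp u) ha, integral_exp, smul_eq_mul,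
    inv_mul_eq_div]

lemma mul_integral_rpow_mul_exp (a β : ℝ) {c d : ℝ} (hc : 0 < c) (hd : 0 < d) :
    a * ∫ u in c..d, u ^ β * exp (a * u) =
      d ^ β * exp (a * d) - c ^ β * exp (a * c) - β * ∫ u in c..d, u ^ (β - 1) * exp (a * u) := by
  have hpow : ∀ u ∈ uIcc c d, HasDerivAt (fun x ↦ x ^ β) (β * u ^ (β - 1)) u := fun u hu ↦
    hasDerivAt_rpow_const (Or.inl ((lt_min hc hd).trans_le hu.1).ne')
  have hexp : ∀ u ∈ uIcc c d, HasDerivAt (fun x ↦ exp (a * x)) (exp (a * u) * a) u := fun u _ ↦ by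
    simpa using ((hasDerivAt_id u).const_mul a).exp
  have hparts := intervalIntegral.integral_deriv_mul_eq_sub hpow hexp
    (by simpa using (intervalIntegrable_rpow_mul_exp 0 (β - 1) hc hd).const_mul β)
    (Continuous.intervalIntegrable (by fun_prop) _ _)
  have hsplit : ∀ u, β * u ^ (β - 1) * exp (a * u) + u ^ β * (exp (a * u) * a) =
      β * (u ^ (β - 1) * exp (a * u)) + a * (u ^ β * exp (a * u)) := fun u ↦ by ring
  simp only [hsplit] at hparts
  rw [intervalIntegral.integral_add
    ((intervalIntegrable_rpow_mul_exp a (β - 1) hc hd).const_mul β)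
    ((intervalIntegrable_rpow_mul_exp a β hc hd).const_mul a),
    intervalIntegral.integral_const_mul, intervalIntegral.integral_const_mul] at hparts
  linarith

lemma integral_rpow_mul_exp_le {a β : ℝ} (ha : 0 < a) (hβ : β ≤ 0) {t : ℝ} (ht : 2 ≤ t) :
    ∫ u in (1:ℝ)..t, u ^ β * exp (a * u) ≤
      t * exp (a * (t / 2)) + (t / 2) ^ β * exp (a * t) / a := by
  have ht2 : (1:ℝ) ≤ t / 2 := by linarith
  rw [← intervalIntegral.integral_add_adjacent_intervals (b := t / 2)
    (intervalIntegrable_rpow_mul_exp a β one_pos (by positivity))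
    (intervalIntegrable_rpow_mul_exp a β (by positivity) (by positivity))]
  gcongr
  · calc ∫ u in (1:ℝ)..t / 2, u ^ β * exp (a * u)
        ≤ ∫ _ in (1:ℝ)..t / 2, exp (a * (t / 2)) := by
          refine intervalIntegral.integral_mono_on ht2
            (intervalIntegrable_rpow_mul_exp a β one_pos (by positivity)) intervalIntegrable_const
            fun u hu ↦ ?_
          calc u ^ β * exp (a * u) ≤ 1 * exp (a * (t / 2)) := by
                gcongr
                · exact rpow_le_one_of_one_le_of_nonpos hu.1 hβ
                · exact hu.2
            _ = _ := one_mul _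
      _ ≤ t * exp (a * (t / 2)) := by
          rw [intervalIntegral.integral_const, smul_eq_mul]
          gcongr
          linarith
  · calc ∫ u in t / 2..t, u ^ β * exp (a * u)
        ≤ ∫ u in t / 2..t, (t / 2) ^ β * exp (a * u) := by
          refine intervalIntegral.integral_mono_on (by linarith)
            (intervalIntegrable_rpow_mul_exp a β (by positivity) (by positivity))
            (Continuous.intervalIntegrable (by fun_prop) _ _) fun u hu ↦ ?_
          exact mul_le_mul_of_nonneg_right (rpow_le_rpow_of_nonpos (by positivity) hu.1 hβ)
            (exp_pos _).le
      _ ≤ (t / 2) ^ β * exp (a * t) / a := by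
          rw [intervalIntegral.integral_const_mul, integral_exp_mul ha.ne', mul_div_assoc]
          gcongr
          linarith [exp_pos (a * (t / 2))]

lemma tendsto_rpow_mul_exp_neg_mul_integral {a β : ℝ} (ha : 0 < a) (hβ : β ≤ 0) :
    Tendsto (fun t ↦ t ^ (-1 - β) * exp (-a * t) * ∫ u in (1:ℝ)..t, u ^ β * exp (a * u))
      atTop (𝓝 0) := by
  have hlim : Tendsto (fun t : ℝ ↦ t ^ (-β) * exp (-(a / 2) * t) + (a * 2 ^ β)⁻¹ * t⁻¹)
      atTop (𝓝 0) := by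
    simpa using (tendsto_rpow_mul_exp_neg_mul_atTop_nhds_zero (-β) (a / 2) (by positivity)).add
      (tendsto_inv_atTop_zero.const_mul (a * 2 ^ β)⁻¹)
  refine squeeze_zero' ?_ ?_ hlim <;> filter_upwards [eventually_ge_atTop 2] with t ht
  · refine mul_nonneg (by positivity) (intervalIntegral.integral_nonneg (by linarith) ?_)
    exact fun u hu ↦ mul_nonneg (rpow_nonneg (by linarith [hu.1]) _) (exp_pos _).le
  · have ht0 : 0 < t := by linarith
    calc t ^ (-1 - β) * exp (-a * t) * ∫ u in (1:ℝ)..t, u ^ β * exp (a * u)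
        ≤ t ^ (-1 - β) * exp (-a * t) *
            (t * exp (a * (t / 2)) + (t / 2) ^ β * exp (a * t) / a) :=
          mul_le_mul_of_nonneg_left (integral_rpow_mul_exp_le ha hβ ht) (by positivity)
      _ = (t ^ (-1 - β) * t) * exp (-a * t + a * (t / 2))
            + (t ^ (-1 - β) * t ^ β) * exp (-a * t + a * t) / (a * 2 ^ β) := by
          rw [div_rpow ht0.le zero_le_two, exp_add, exp_add]
          field_simp
      _ = t ^ (-β) * exp (-(a / 2) * t) + (a * 2 ^ β)⁻¹ * t⁻¹ := by
          rw [← rpow_add_one ht0.ne', ← rpow_add ht0, show -1 - β + 1 = -β by ring,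
            show -1 - β + β = -1 by ring, rpow_neg_one,
            show -a * t + a * (t / 2) = -(a / 2) * t by ring, neg_mul a t, neg_add_cancel, exp_zero]
          ring

/-- `Γ(H + 1/2) · fouKernel a H` as a function of `α = H - 1/2`. -/
noncomputable def fouKernelUnscaled (a α t : ℝ) : ℝ :=
  t ^ α - a * ∫ s in (0:ℝ)..t, (t - s) ^ α * exp (-a * s)

lemma integral_sub_rpow_mul_exp (a α t : ℝ) :
    ∫ s in (0:ℝ)..t, (t - s) ^ α * exp (-a * s) =
      exp (-a * t) * ∫ u in (0:ℝ)..t, u ^ α * exp (a * u) := by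
  have hcomp := intervalIntegral.integral_comp_sub_left (fun u ↦ u ^ α * exp (a * u)) t
    (a := 0) (b := t)
  rw [sub_self, sub_zero] at hcomp
  rw [← hcomp, ← intervalIntegral.integral_const_mul]
  refine intervalIntegral.integral_congr fun s _ ↦ ?_
  rw [mul_left_comm, ← exp_add]
  ring_nf

lemma exists_fouKernelUnscaled_expansion (a : ℝ) {α : ℝ} (hα : -1 < α) :
    ∃ C, ∀ t ≥ 1, a * t ^ (1 - α) * fouKernelUnscaled a α t =
      α + C * (t ^ (1 - α) * exp (-a * t)) +
        α * (1 - α) *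
          (t ^ (1 - α) * exp (-a * t) * ∫ u in (1:ℝ)..t, u ^ (α - 2) * exp (a * u)) := by
  set J := ∫ u in (0:ℝ)..1, u ^ α * exp (a * u)
  refine ⟨a * exp a - a ^ 2 * J - α * exp a, fun t ht ↦ ?_⟩
  have ht0 : 0 < t := by linarith
  have hJ : IntervalIntegrable (fun u ↦ u ^ α * exp (a * u)) volume 0 1 :=
    (intervalIntegral.intervalIntegrable_rpow' hα).mul_continuousOn (by fun_prop)
  have hsplit := intervalIntegral.integral_add_adjacent_intervals hJ
    (intervalIntegrable_rpow_mul_exp a α one_pos ht0)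
  have hparts₁ := mul_integral_rpow_mul_exp a α one_pos ht0
  have hparts₂ := mul_integral_rpow_mul_exp a (α - 1) one_pos ht0
  rw [sub_sub, show α - 1 - 1 = α - 2 by ring] at hparts₂
  simp only [one_rpow, one_mul, mul_one] at hparts₁ hparts₂
  have hexp : exp (-a * t) * exp (a * t) = 1 := by rw [← exp_add]; simp
  have hpow₂ : t ^ (1 - α) * t ^ (α - 1) = 1 := by rw [← rpow_add ht0]; simp
  rw [fouKernelUnscaled, integral_sub_rpow_mul_exp, ← hsplit]
  linear_combination (-(a * t ^ (1 - α) * exp (-a * t))) * hparts₁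
    + (α * t ^ (1 - α) * exp (-a * t)) * hparts₂
    + (α * t ^ (1 - α) * t ^ (α - 1) - a * t ^ (1 - α) * t ^ α) * hexp + α * hpow₂

lemma tendsto_mul_rpow_mul_fouKernelUnscaled {a α : ℝ} (ha : 0 < a) (hα₁ : -1 < α)
    (hα₂ : α ≤ 2) :
    Tendsto (fun t ↦ a * t ^ (1 - α) * fouKernelUnscaled a α t) atTop (𝓝 α) := by
  obtain ⟨C, hC⟩ := exists_fouKernelUnscaled_expansion a hα₁
  have hY := tendsto_rpow_mul_exp_neg_mul_atTop_nhds_zero (1 - α) a ha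
  have hZ := tendsto_rpow_mul_exp_neg_mul_integral ha (β := α - 2) (by linarith)
  rw [show -1 - (α - 2) = 1 - α by ring] at hZ
  have hlim := (tendsto_const_nhds (x := α)).add (hY.const_mul C) |>.add
    (hZ.const_mul (α * (1 - α)))
  rw [mul_zero, mul_zero, add_zero, add_zero] at hlim
  exact hlim.congr' (eventually_atTop.mpr ⟨1, fun t ht ↦ (hC t ht).symm⟩)

theorem fouKernel_asymptotics_infinity (a H : ℝ) (ha : 0 < a)
    (hH : H ∈ Set.Ioo (0:ℝ) 1) (hH' : H ≠ 1/2) :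
    Tendsto (fun t : ℝ => fouKernel a H t * Real.Gamma (H - 1/2) * a * t ^ (3/2 - H))
      atTop (𝓝 1) := by
  obtain ⟨α, rfl⟩ : ∃ α, H = α + 1/2 := ⟨H - 1/2, by ring⟩
  have hα : α ≠ 0 := by simpa using hH'
  have hΓ : Gamma (α + 1/2 + 1/2) = α * Gamma α := by
    rw [← Gamma_add_one hα]; ring_nf
  have hΓα : Gamma α ≠ 0 :=
    right_ne_zero_of_mul (hΓ ▸ (Gamma_pos_of_pos (by linarith [hH.1])).ne')
  have hlim := (tendsto_mul_rpow_mul_fouKernelUnscaled ha (α := α) (by linarith [hH.1])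
    (by linarith [hH.2])).div_const α
  rw [div_self hα] at hlim
  refine hlim.congr fun t ↦ ?_
  rw [fouKernel, hΓ, add_sub_cancel_right, show 3/2 - (α + 1/2) = 1 - α by ring,
    fouKernelUnscaled]
  field_simp
end

section
/- Fix a > 0 and H ∈ (0,1). Then D(τ) · Γ(H+5/2) · τ^{−H−3/2} → 1 as τ → 0⁺; equivalently, D(τ) = (1/(Γ(H+5/2) a^{H+3/2})) ( (aτ)^{H+3/2} + o( (aτ)^{H+3/2} ) ) as τ → 0⁺. -/
open MeasureTheory Real Set Filter Topology

/-- The skew function `D(τ) = ∫₀^τ (τ-u) K(u) du`. -/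
noncomputable def fouD (a H : ℝ) (τ : ℝ) : ℝ :=
  ∫ u in (0:ℝ)..τ, (τ - u) * fouKernel a H u

/-!
With `h = H - 1/2` and `g(u) = ∫₀^u (u - s)^h e^{-as} ds`, the kernel is
`K(u) = (u^h - a g(u)) / Γ(H + 1/2)`. Against the weight `τ - u`, the power term integrates to
exactly `τ^{H+3/2} / Γ(H + 5/2)`. Since `0 < e^{-as} ≤ 1`, `0 ≤ g(u) ≤ u^{h+1}/(h+1)`, so the
correction term is nonnegative and `O(τ^{H+5/2})`:
`|D(τ) Γ(H + 5/2) - τ^{H+3/2}| ≤ a τ^{H+5/2} / (H + 5/2)`.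
-/

open intervalIntegral

theorem integral_sub_mul_rpow {p : ℝ} (hp : -1 < p) {τ : ℝ} (hτ : 0 ≤ τ) :
    ∫ u in (0:ℝ)..τ, (τ - u) * u ^ p = τ ^ (p + 2) / ((p + 1) * (p + 2)) := by
  have hp1 : p + 1 ≠ 0 := by linarith
  have hp2 : p + 1 + 1 ≠ 0 := by linarith
  have hsplit : ∫ u in (0:ℝ)..τ, (τ - u) * u ^ p = ∫ u in (0:ℝ)..τ, (τ * u ^ p - u ^ (p + 1)) := by
    refine integral_congr fun u hu => ?_
    rw [uIcc_of_le hτ] at hu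
    simp only [rpow_add_one' hu.1 hp1]
    ring
  rw [hsplit, integral_sub ((intervalIntegrable_rpow' hp).const_mul τ)
      (intervalIntegrable_rpow' (by linarith)), intervalIntegral.integral_const_mul,
    integral_rpow (Or.inl hp), integral_rpow (Or.inl (by linarith)), zero_rpow hp1, zero_rpow hp2,
    show p + 2 = p + 1 + 1 by ring, rpow_add_one' hτ hp2]
  field_simp
  ring

noncomputable def powExpConv (a h u : ℝ) : ℝ :=
  ∫ s in (0:ℝ)..u, (u - s) ^ h * exp (-a * s)

theorem powExpConv_eq_exp_mul_integral (a h u : ℝ) :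
    powExpConv a h u = exp (-a * u) * ∫ t in (0:ℝ)..u, t ^ h * exp (a * t) := by
  have hsubst := integral_comp_sub_left (fun t => exp (-a * u) * (t ^ h * exp (a * t))) u
    (a := 0) (b := u)
  simp only [sub_self, sub_zero] at hsubst
  rw [← intervalIntegral.integral_const_mul, ← hsubst, powExpConv]
  refine integral_congr fun s _ => ?_
  rw [mul_left_comm, ← exp_add]
  ring_nf

theorem continuous_powExpConv (a : ℝ) {h : ℝ} (hh : -1 < h) : Continuous (powExpConv a h) := by
  rw [funext (powExpConv_eq_exp_mul_integral a h)]
  exact (continuous_exp.comp (continuous_const.mul continuous_id)).mul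
    (continuous_primitive (fun _ _ =>
      (intervalIntegrable_rpow' hh).mul_continuousOn (by fun_prop)) 0)

theorem powExpConv_nonneg (a h : ℝ) {u : ℝ} (hu : 0 ≤ u) : 0 ≤ powExpConv a h u :=
  integral_nonneg hu fun s hs => mul_nonneg (rpow_nonneg (by linarith [hs.2]) h) (exp_nonneg _)

theorem powExpConv_le {a : ℝ} (ha : 0 ≤ a) {h : ℝ} (hh : -1 < h) {u : ℝ} (hu : 0 ≤ u) :
    powExpConv a h u ≤ u ^ (h + 1) / (h + 1) := by
  have hpow : IntervalIntegrable (fun s => (u - s) ^ h) volume 0 u := by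
    simpa using (intervalIntegrable_rpow' hh (a := u) (b := 0)).comp_sub_left u
  calc powExpConv a h u ≤ ∫ s in (0:ℝ)..u, (u - s) ^ h := by
        refine integral_mono_on hu (hpow.mul_continuousOn (by fun_prop)) hpow fun s hs => ?_
        refine mul_le_of_le_one_right (rpow_nonneg (by linarith [hs.2]) h) ?_
        exact exp_le_one_iff.2 (by nlinarith [hs.1])
    _ = ∫ t in (0:ℝ)..u, t ^ h := by
        simpa using integral_comp_sub_left (fun t => t ^ h) u (a := 0) (b := u)
    _ = u ^ (h + 1) / (h + 1) := by
        rw [integral_rpow (Or.inl hh), zero_rpow (by linarith), sub_zero]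

theorem integral_sub_mul_powExpConv_nonneg (a h : ℝ) {τ : ℝ} (hτ : 0 ≤ τ) :
    0 ≤ ∫ u in (0:ℝ)..τ, (τ - u) * powExpConv a h u :=
  integral_nonneg hτ fun u hu => mul_nonneg (by linarith [hu.2]) (powExpConv_nonneg a h hu.1)

theorem integral_sub_mul_powExpConv_le {a : ℝ} (ha : 0 ≤ a) {h : ℝ} (hh : -1 < h) {τ : ℝ}
    (hτ : 0 ≤ τ) :
    ∫ u in (0:ℝ)..τ, (τ - u) * powExpConv a h u
      ≤ τ ^ (h + 3) / ((h + 1) * (h + 2) * (h + 3)) := by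
  calc ∫ u in (0:ℝ)..τ, (τ - u) * powExpConv a h u
      ≤ ∫ u in (0:ℝ)..τ, (τ - u) * u ^ (h + 1) / (h + 1) := by
        refine integral_mono_on hτ
          (((continuous_const.sub continuous_id).mul
            (continuous_powExpConv a hh)).intervalIntegrable _ _)
          (((intervalIntegrable_rpow' (by linarith)).continuousOn_mul (by fun_prop)).div_const _)
          fun u hu => ?_
        rw [mul_div_assoc]
        exact mul_le_mul_of_nonneg_left (powExpConv_le ha hh hu.1) (by linarith [hu.2])
    _ = τ ^ (h + 3) / ((h + 1) * (h + 2) * (h + 3)) := by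
        rw [intervalIntegral.integral_div, integral_sub_mul_rpow (by linarith) hτ, div_div,
          show h + 1 + 2 = h + 3 by ring, show h + 1 + 1 = h + 2 by ring]
        ring

theorem fouD_eq {H : ℝ} (hH : -1/2 < H) (a : ℝ) {τ : ℝ} (hτ : 0 ≤ τ) :
    fouD a H τ = (τ ^ (H + 3/2) / ((H + 1/2) * (H + 3/2))
      - a * ∫ u in (0:ℝ)..τ, (τ - u) * powExpConv a (H - 1/2) u) / Gamma (H + 1/2) := by
  have hh : -1 < H - 1/2 := by linarith
  have hpow : IntervalIntegrable (fun u => (τ - u) * u ^ (H - 1/2)) volume 0 τ :=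
    (intervalIntegrable_rpow' hh).continuousOn_mul (by fun_prop)
  have hconv : IntervalIntegrable (fun u => a * ((τ - u) * powExpConv a (H - 1/2) u)) volume 0 τ :=
    (continuous_const.mul ((continuous_const.sub continuous_id).mul
      (continuous_powExpConv a hh))).intervalIntegrable _ _
  have hexpand : fouD a H τ = (∫ u in (0:ℝ)..τ,
      ((τ - u) * u ^ (H - 1/2) - a * ((τ - u) * powExpConv a (H - 1/2) u))) / Gamma (H + 1/2) := by
    rw [fouD, ← intervalIntegral.integral_div]
    refine integral_congr fun u _ => ?_
    simp only [fouKernel, powExpConv]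
    ring
  rw [hexpand, integral_sub hpow hconv, intervalIntegral.integral_const_mul,
    integral_sub_mul_rpow hh hτ]
  ring_nf

theorem fouD_mul_Gamma_eq {H : ℝ} (hH : -1/2 < H) (a : ℝ) {τ : ℝ} (hτ : 0 ≤ τ) :
    fouD a H τ * Gamma (H + 5/2) = τ ^ (H + 3/2)
      - (H + 1/2) * (H + 3/2) * a * ∫ u in (0:ℝ)..τ, (τ - u) * powExpConv a (H - 1/2) u := by
  have hH₁ : 0 < H + 1/2 := by linarith
  have hGamma : Gamma (H + 5/2) = (H + 1/2) * (H + 3/2) * Gamma (H + 1/2) := by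
    rw [show H + 5/2 = H + 3/2 + 1 by ring, Gamma_add_one (by linarith),
      show H + 3/2 = H + 1/2 + 1 by ring, Gamma_add_one hH₁.ne']
    ring
  rw [fouD_eq hH a hτ, hGamma, div_mul_eq_mul_div, mul_div_assoc,
    mul_div_cancel_right₀ _ (Gamma_pos_of_pos hH₁).ne', sub_mul,
    div_mul_cancel₀ _ (mul_pos hH₁ (by linarith)).ne']
  ring

theorem abs_fouD_mul_Gamma_sub_rpow_le {a : ℝ} (ha : 0 ≤ a) {H : ℝ} (hH : -1/2 < H) {τ : ℝ}
    (hτ : 0 ≤ τ) :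
    |fouD a H τ * Gamma (H + 5/2) - τ ^ (H + 3/2)| ≤ a / (H + 5/2) * τ ^ (H + 5/2) := by
  have hc : 0 < (H + 1/2) * (H + 3/2) := mul_pos (by linarith) (by linarith)
  have hR₀ := integral_sub_mul_powExpConv_nonneg a (H - 1/2) hτ
  have hR₁ := integral_sub_mul_powExpConv_le ha (by linarith : -1 < H - 1/2) hτ
  rw [show H - 1/2 + 1 = H + 1/2 by ring, show H - 1/2 + 2 = H + 3/2 by ring,
    show H - 1/2 + 3 = H + 5/2 by ring, le_div_iff₀ (mul_pos hc (by linarith))] at hR₁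
  rw [fouD_mul_Gamma_eq hH a hτ, sub_sub_cancel_left, abs_neg,
    abs_of_nonneg (mul_nonneg (mul_nonneg hc.le ha) hR₀),
    div_mul_eq_mul_div, le_div_iff₀ (by linarith)]
  linear_combination a * hR₁

theorem abs_fouD_mul_Gamma_mul_rpow_sub_one_le {a : ℝ} (ha : 0 ≤ a) {H : ℝ} (hH : -1/2 < H)
    {τ : ℝ} (hτ : 0 < τ) :
    |fouD a H τ * Gamma (H + 5/2) * τ ^ (-H - 3/2) - 1| ≤ a / (H + 5/2) * τ := by
  have hτ₀ : τ ^ (H + 3/2) * τ ^ (-H - 3/2) = 1 := by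
    rw [← rpow_add hτ, show H + 3/2 + (-H - 3/2) = 0 by ring, rpow_zero]
  have hτ₁ : τ ^ (H + 5/2) * τ ^ (-H - 3/2) = τ := by
    rw [← rpow_add hτ, show H + 5/2 + (-H - 3/2) = 1 by ring, rpow_one]
  calc |fouD a H τ * Gamma (H + 5/2) * τ ^ (-H - 3/2) - 1|
      = |fouD a H τ * Gamma (H + 5/2) - τ ^ (H + 3/2)| * τ ^ (-H - 3/2) := by
        rw [← hτ₀, ← sub_mul, abs_mul, abs_of_pos (rpow_pos_of_pos hτ _)]
    _ ≤ a / (H + 5/2) * τ ^ (H + 5/2) * τ ^ (-H - 3/2) :=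
        mul_le_mul_of_nonneg_right (abs_fouD_mul_Gamma_sub_rpow_le ha hH hτ.le)
          (rpow_nonneg hτ.le _)
    _ = a / (H + 5/2) * τ := by rw [mul_assoc, hτ₁]

theorem fouD_asymptotics_zero (a H : ℝ) (ha : 0 < a) (hH : H ∈ Set.Ioo (0:ℝ) 1) :
    Tendsto (fun τ : ℝ => fouD a H τ * Real.Gamma (H + 5/2) * τ ^ (-H - 3/2))
      (𝓝[>] 0) (𝓝 1) := by
  have hlin : Tendsto (fun τ : ℝ => a / (H + 5/2) * τ) (𝓝[>] 0) (𝓝 0) := by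
    simpa using ((continuous_const_mul (a / (H + 5/2))).tendsto 0).mono_left nhdsWithin_le_nhds
  rw [tendsto_iff_norm_sub_tendsto_zero]
  refine squeeze_zero' (Eventually.of_forall fun _ => norm_nonneg _) ?_ hlin
  filter_upwards [self_mem_nhdsWithin] with τ hτ
  exact abs_fouD_mul_Gamma_mul_rpow_sub_one_le ha.le (by linarith [hH.1]) hτ
end

section
/- Let H ∈ (1/2,1), let K ∈ L²(0,∞), and suppose there exists c_Z ≠ 0 such that K(t) · t^{3/2−H} → c_Z as t → ∞. Then the covariance function C(s) = ∫₀^∞ K(u) K(u+s) du satisfies C(s) · s^{2−2H} → k_Z as s → ∞, where k_Z = c_Z² Γ(2−2H) Γ(H−1/2) / Γ(3/2−H); equivalently C(s) = k_Z s^{2H−2} (1+o(1)) as s → ∞ (long-range correlation). -/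
/-!
Split `∫₀^∞ K(u) K(u+s) du` at a point `M` beyond which `|K u| ≤ C u^(-p)`, with `p = 3/2 - H`.
The piece over `(0, M]` is `O(s^(-p))`, negligible after multiplying by `s^(2p-1)` since `p < 1`.
On the tail, `u = s v` turns `s^(2p-1) ∫_M^∞ K(u) K(u+s) du` into
`∫_{M/s}^∞ s^(2p) K(s v) K(s(1+v)) dv`; the integrand tends to `c² v^(-p) (1+v)^(-p)` and is
dominated by `C² v^(-p) (1+v)^(-p)`, so the limit is `c² B(1-p, 2p-1)`. The Beta integral over
`(0, ∞)` is reduced to the one over `(0, 1)` by `x ↦ x / (1 - x)`.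
-/

open MeasureTheory Real Set Filter Topology

lemma integral_rpow_mul_one_sub_rpow {a b : ℝ} (ha : 0 < a) (hb : 0 < b) :
    ∫ x in (0:ℝ)..1, x ^ (a - 1) * (1 - x) ^ (b - 1) = Gamma a * Gamma b / Gamma (a + b) := by
  have hbeta : Complex.betaIntegral a b = ↑(∫ x in (0:ℝ)..1, x ^ (a - 1) * (1 - x) ^ (b - 1)) := by
    rw [Complex.betaIntegral, ← intervalIntegral.integral_ofReal]
    refine intervalIntegral.integral_congr fun x hx => ?_
    rw [uIcc_of_le zero_le_one] at hx
    push_cast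
    rw [Complex.ofReal_cpow hx.1, Complex.ofReal_cpow (sub_nonneg.2 hx.2)]
    push_cast
    ring_nf
  have h := Complex.betaIntegral_eq_Gamma_mul_div a b (by simpa) (by simpa)
  rw [hbeta, ← Complex.ofReal_add, Complex.Gamma_ofReal, Complex.Gamma_ofReal,
    Complex.Gamma_ofReal] at h
  exact_mod_cast h

lemma image_div_one_sub_Ioo : (fun x : ℝ => x / (1 - x)) '' Ioo 0 1 = Ioi 0 := by
  ext v
  constructor
  · rintro ⟨x, ⟨hx0, hx1⟩, rfl⟩
    exact div_pos hx0 (sub_pos.2 hx1)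
  · intro (hv : 0 < v)
    refine ⟨v / (1 + v), ⟨by positivity, (div_lt_one (by positivity)).2 (by linarith)⟩, ?_⟩
    field_simp
    ring

lemma injOn_div_one_sub : InjOn (fun x : ℝ => x / (1 - x)) (Ioo 0 1) := by
  intro x hx y hy hxy
  have := (sub_pos.2 hx.2).ne'
  have := (sub_pos.2 hy.2).ne'
  field_simp at hxy
  linarith

lemma hasDerivAt_div_one_sub {x : ℝ} (hx : x ≠ 1) :
    HasDerivAt (fun x : ℝ => x / (1 - x)) ((1 - x) ^ 2)⁻¹ x := by
  rw [show ((1 - x) ^ 2)⁻¹ = (1 * (1 - x) - x * -1) / (1 - x) ^ 2 by ring]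
  exact (hasDerivAt_id' x).div ((hasDerivAt_id' x).const_sub 1) (sub_ne_zero.2 hx.symm)

lemma integral_Ioi_rpow_mul_one_add_rpow {a b : ℝ} (ha : 0 < a) (hb : 0 < b) :
    ∫ v in Ioi (0:ℝ), v ^ (a - 1) * (1 + v) ^ (-(a + b)) = Gamma a * Gamma b / Gamma (a + b) := by
  have key := integral_image_eq_integral_abs_deriv_smul measurableSet_Ioo
    (fun x hx => (hasDerivAt_div_one_sub hx.2.ne).hasDerivWithinAt) injOn_div_one_sub
    (fun v : ℝ => v ^ (a - 1) * (1 + v) ^ (-(a + b)))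
  rw [image_div_one_sub_Ioo] at key
  rw [key, ← integral_rpow_mul_one_sub_rpow ha hb,
    intervalIntegral.integral_of_le zero_le_one, integral_Ioc_eq_integral_Ioo]
  refine setIntegral_congr_fun measurableSet_Ioo fun x ⟨hx0, hx1⟩ => ?_
  have hy : 0 < 1 - x := sub_pos.2 hx1
  have h1 : 1 + x / (1 - x) = (1 - x)⁻¹ := by field_simp; ring
  have h2 : ((1 - x) ^ 2)⁻¹ = (1 - x) ^ (-2 : ℝ) := by
    rw [rpow_neg hy.le, rpow_two]
  rw [smul_eq_mul, h1, abs_of_pos (by positivity), h2, div_rpow hx0.le hy.le,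
    inv_rpow hy.le, ← rpow_neg hy.le, neg_neg, div_eq_mul_inv, ← rpow_neg hy.le]
  calc (1 - x) ^ (-2 : ℝ) * (x ^ (a - 1) * (1 - x) ^ (-(a - 1)) * (1 - x) ^ (a + b))
      = x ^ (a - 1) * ((1 - x) ^ (-2 : ℝ) * (1 - x) ^ (-(a - 1)) * (1 - x) ^ (a + b)) := by ring
    _ = x ^ (a - 1) * (1 - x) ^ (b - 1) := by
      rw [← rpow_add hy, ← rpow_add hy]
      ring_nf

lemma integrableOn_Ioi_rpow_mul_one_add_rpow {a b : ℝ} (ha : 0 < a) (hb : 0 < b) :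
    IntegrableOn (fun v : ℝ => v ^ (a - 1) * (1 + v) ^ (-(a + b))) (Ioi 0) :=
  .of_integral_ne_zero <| by
    rw [integral_Ioi_rpow_mul_one_add_rpow ha hb]
    have := Gamma_pos_of_pos ha
    have := Gamma_pos_of_pos hb
    have := Gamma_pos_of_pos (add_pos ha hb)
    positivity

lemma exists_abs_le_mul_rpow_neg_of_tendsto {f : ℝ → ℝ} {p c : ℝ}
    (h : Tendsto (fun t => f t * t ^ p) atTop (𝓝 c)) :
    ∃ C M, 0 ≤ C ∧ 0 < M ∧ ∀ u, M ≤ u → |f u| ≤ C * u ^ (-p) := by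
  obtain ⟨M, hM⟩ := eventually_atTop.1 <|
    (h.abs.eventually (gt_mem_nhds (lt_add_one |c|))).and (eventually_gt_atTop 0)
  refine ⟨|c| + 1, M, by positivity, (hM M le_rfl).2, fun u hu => ?_⟩
  obtain ⟨hbound, hu⟩ := hM u hu
  rw [abs_mul, abs_of_pos (rpow_pos_of_pos hu p)] at hbound
  calc |f u| = |f u| * u ^ p * u ^ (-p) := by
        rw [mul_assoc, ← rpow_add hu, add_neg_cancel, rpow_zero, mul_one]
    _ ≤ (|c| + 1) * u ^ (-p) := by gcongr

lemma MeasureTheory.MemLp.comp_add_right_restrict_Ioi {K : ℝ → ℝ} {q : ENNReal}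
    (hK : MemLp K q (volume.restrict (Ioi 0))) {s : ℝ} (hs : 0 ≤ s) :
    MemLp (fun u => K (u + s)) q (volume.restrict (Ioi 0)) := by
  have hmp : MeasurePreserving (· + s) (volume.restrict (Ioi 0)) (volume.restrict (Ioi s)) := by
    simpa using (measurePreserving_add_right volume s).restrict_preimage
      (measurableSet_Ioi (a := s))
  exact (hK.mono_measure (Measure.restrict_mono (Ioi_subset_Ioi hs) le_rfl)).comp_measurePreserving
    hmp

lemma integrableOn_mul_comp_add_right {K : ℝ → ℝ} (hK : MemLp K 2 (volume.restrict (Ioi 0)))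
    {s : ℝ} (hs : 0 ≤ s) : IntegrableOn (fun u => K u * K (u + s)) (Ioi 0) :=
  hK.integrable_mul (hK.comp_add_right_restrict_Ioi hs)

lemma tendsto_integral_Ioc_mul_comp_add_mul_rpow {K : ℝ → ℝ} {M C p r : ℝ}
    (hK : IntegrableOn K (Ioc 0 M)) (hC : 0 ≤ C) (hp : 0 ≤ p) (hrp : r < p)
    (hbound : ∀ u, M ≤ u → |K u| ≤ C * u ^ (-p)) :
    Tendsto (fun s => (∫ u in Ioc 0 M, K u * K (u + s)) * s ^ r) atTop (𝓝 0) := by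
  have hdecay : Tendsto (fun s : ℝ => (∫ u in Ioc 0 M, |K u|) * C * s ^ (r - p)) atTop (𝓝 0) := by
    simpa using (tendsto_rpow_neg_atTop (sub_pos.2 hrp)).const_mul ((∫ u in Ioc 0 M, |K u|) * C)
  refine squeeze_zero_norm' ?_ hdecay
  filter_upwards [eventually_ge_atTop M, eventually_gt_atTop 0] with s hsM hs
  have hshift : ∀ u ∈ Ioc 0 M, ‖K u * K (u + s)‖ ≤ |K u| * (C * s ^ (-p)) := by
    intro u hu
    rw [norm_mul, Real.norm_eq_abs, Real.norm_eq_abs]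
    gcongr
    calc |K (u + s)| ≤ C * (u + s) ^ (-p) := hbound _ (by linarith [hu.1])
      _ ≤ C * s ^ (-p) := mul_le_mul_of_nonneg_left
        (rpow_le_rpow_of_nonpos hs (by linarith [hu.1]) (neg_nonpos.2 hp)) hC
  have hint := norm_integral_le_of_norm_le (hK.abs.mul_const _)
    ((ae_restrict_iff' measurableSet_Ioc).2 (.of_forall hshift))
  rw [integral_mul_const] at hint
  calc ‖(∫ u in Ioc 0 M, K u * K (u + s)) * s ^ r‖
      = ‖∫ u in Ioc 0 M, K u * K (u + s)‖ * s ^ r := by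
        rw [norm_mul, Real.norm_of_nonneg (rpow_nonneg hs.le r)]
    _ ≤ (∫ u in Ioc 0 M, |K u|) * (C * s ^ (-p)) * s ^ r := by gcongr
    _ = (∫ u in Ioc 0 M, |K u|) * C * s ^ (r - p) := by
        rw [sub_eq_add_neg, rpow_add hs]; ring

lemma rpow_two_mul_mul_rpow_neg_mul_rpow_neg {s x y : ℝ} (hs : 0 < s) (hx : 0 < x) (hy : 0 < y)
    (p : ℝ) : s ^ (2 * p) * ((s * x) ^ (-p) * (s * y) ^ (-p)) = x ^ (-p) * y ^ (-p) := by
  rw [mul_rpow hs.le hx.le, mul_rpow hs.le hy.le, two_mul, rpow_add hs, rpow_neg hs.le]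
  have := (rpow_pos_of_pos hs p).ne'
  field_simp

noncomputable def scaledTail (K : ℝ → ℝ) (p M s : ℝ) : ℝ → ℝ :=
  (Ioi (M / s)).indicator fun v => s ^ (2 * p) * (K (s * v) * K (s * (1 + v)))

section scaledTail

variable {K : ℝ → ℝ} {p M s : ℝ}

lemma integral_scaledTail (hM : 0 ≤ M) (hs : 0 < s) :
    ∫ v in Ioi 0, scaledTail K p M s v = (∫ u in Ioi M, K u * K (u + s)) * s ^ (2 * p - 1) := by
  have hsub : Ioi (M / s) ⊆ Ioi 0 := Ioi_subset_Ioi (by positivity)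
  have hsubst := integral_comp_mul_left_Ioi (fun u => K u * K (u + s)) (M / s) hs
  rw [mul_div_cancel₀ M hs.ne'] at hsubst
  have hshift : ∀ v, s * (1 + v) = s * v + s := fun v => by ring
  rw [scaledTail, setIntegral_indicator measurableSet_Ioi, inter_eq_right.2 hsub,
    integral_const_mul]
  simp only [hshift]
  rw [hsubst, smul_eq_mul, rpow_sub hs, rpow_one]
  ring

lemma aestronglyMeasurable_scaledTail (hs : 0 < s)
    (hint : IntegrableOn (fun u => K u * K (u + s)) (Ioi M)) :
    AEStronglyMeasurable (scaledTail K p M s) (volume.restrict (Ioi 0)) := by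
  have hsubst := (integrableOn_Ioi_comp_mul_left_iff (fun u => K u * K (u + s)) (M / s) hs).2
    (by rwa [mul_div_cancel₀ M hs.ne'])
  have hshift : ∀ v, s * (1 + v) = s * v + s := fun v => by ring
  simp only [← hshift] at hsubst
  exact ((aestronglyMeasurable_indicator_iff measurableSet_Ioi).2
    (hsubst.const_mul (s ^ (2 * p))).aestronglyMeasurable).restrict

lemma norm_scaledTail_le {C v : ℝ} (hC : 0 ≤ C) (hbound : ∀ u, M ≤ u → |K u| ≤ C * u ^ (-p))
    (hs : 0 < s) (hv : 0 < v) :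
    ‖scaledTail K p M s v‖ ≤ C ^ 2 * (v ^ (-p) * (1 + v) ^ (-p)) := by
  by_cases hvM : v ∈ Ioi (M / s)
  · have hsv : M ≤ s * v := by
      have := (div_lt_iff₀ hs).1 hvM
      linarith
    rw [scaledTail, indicator_of_mem hvM, ← rpow_two_mul_mul_rpow_neg_mul_rpow_neg hs hv
      (by positivity : (0:ℝ) < 1 + v) p, norm_mul, norm_mul, Real.norm_of_nonneg (by positivity),
      Real.norm_eq_abs, Real.norm_eq_abs]
    calc s ^ (2 * p) * (|K (s * v)| * |K (s * (1 + v))|)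
        ≤ s ^ (2 * p) * (C * (s * v) ^ (-p) * (C * (s * (1 + v)) ^ (-p))) := by
          gcongr
          · exact hbound _ hsv
          · exact hbound _ (by nlinarith)
      _ = C ^ 2 * (s ^ (2 * p) * ((s * v) ^ (-p) * (s * (1 + v)) ^ (-p))) := by ring
  · rw [scaledTail, indicator_of_notMem hvM, norm_zero]
    positivity

lemma tendsto_scaledTail {c v : ℝ} (hK : Tendsto (fun t => K t * t ^ p) atTop (𝓝 c))
    (hv : 0 < v) :
    Tendsto (fun s => scaledTail K p M s v) atTop (𝓝 (c ^ 2 * (v ^ (-p) * (1 + v) ^ (-p)))) := by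
  have hv' : 0 < 1 + v := by linarith
  have hprod := ((hK.comp (tendsto_id.atTop_mul_const hv)).mul
    (hK.comp (tendsto_id.atTop_mul_const hv'))).mul_const (v ^ (-p) * (1 + v) ^ (-p))
  rw [← sq] at hprod
  refine hprod.congr' ?_
  filter_upwards [eventually_gt_atTop (M / v), eventually_gt_atTop 0] with s hsv hs
  have hvM : v ∈ Ioi (M / s) := by
    rw [mem_Ioi, div_lt_iff₀ hs, mul_comm]
    exact (div_lt_iff₀ hv).1 hsv
  rw [scaledTail, indicator_of_mem hvM, ← rpow_two_mul_mul_rpow_neg_mul_rpow_neg hs hv hv' p,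
    Function.comp_apply, Function.comp_apply, id, rpow_neg (by positivity),
    rpow_neg (by positivity)]
  have := (rpow_pos_of_pos (mul_pos hs hv) p).ne'
  have := (rpow_pos_of_pos (mul_pos hs hv') p).ne'
  field_simp

lemma tendsto_integral_Ioi_mul_comp_add_mul_rpow {C c : ℝ} (hM : 0 ≤ M) (hC : 0 ≤ C)
    (hbound : ∀ u, M ≤ u → |K u| ≤ C * u ^ (-p))
    (hK : Tendsto (fun t => K t * t ^ p) atTop (𝓝 c))
    (hint : IntegrableOn (fun v : ℝ => v ^ (-p) * (1 + v) ^ (-p)) (Ioi 0))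
    (hprod : ∀ s, 0 < s → IntegrableOn (fun u => K u * K (u + s)) (Ioi M)) :
    Tendsto (fun s => (∫ u in Ioi M, K u * K (u + s)) * s ^ (2 * p - 1)) atTop
      (𝓝 (c ^ 2 * ∫ v in Ioi (0:ℝ), v ^ (-p) * (1 + v) ^ (-p))) := by
  rw [← integral_const_mul]
  refine (tendsto_integral_filter_of_dominated_convergence (F := scaledTail K p M)
    (fun v => C ^ 2 * (v ^ (-p) * (1 + v) ^ (-p))) ?_ ?_ (hint.const_mul _) ?_).congr' ?_
  · filter_upwards [eventually_gt_atTop 0] with s hs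
      using aestronglyMeasurable_scaledTail hs (hprod s hs)
  · filter_upwards [eventually_gt_atTop 0] with s hs
    filter_upwards [ae_restrict_mem measurableSet_Ioi] with v hv
      using norm_scaledTail_le hC hbound hs hv
  · filter_upwards [ae_restrict_mem measurableSet_Ioi] with v hv using tendsto_scaledTail hK hv
  · filter_upwards [eventually_gt_atTop 0] with s hs using integral_scaledTail hM hs

end scaledTail

theorem tendsto_integral_mul_comp_add_mul_rpow {K : ℝ → ℝ} {p c : ℝ}
    (hK2 : MemLp K 2 (volume.restrict (Ioi 0))) (hp : p ∈ Ioo (1 / 2) 1)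
    (hK : Tendsto (fun t => K t * t ^ p) atTop (𝓝 c)) :
    Tendsto (fun s => (∫ u in Ioi 0, K u * K (u + s)) * s ^ (2 * p - 1)) atTop
      (𝓝 (c ^ 2 * (Gamma (1 - p) * Gamma (2 * p - 1) / Gamma p))) := by
  obtain ⟨hp₁, hp₂⟩ := hp
  obtain ⟨C, M, hC, hM, hbound⟩ := exists_abs_le_mul_rpow_neg_of_tendsto hK
  have hprod : ∀ s, 0 ≤ s → IntegrableOn (fun u => K u * K (u + s)) (Ioi 0) :=
    fun s hs => integrableOn_mul_comp_add_right hK2 hs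
  have hbeta := integral_Ioi_rpow_mul_one_add_rpow (a := 1 - p) (b := 2 * p - 1)
    (by linarith) (by linarith)
  have hbeta_int := integrableOn_Ioi_rpow_mul_one_add_rpow (a := 1 - p) (b := 2 * p - 1)
    (by linarith) (by linarith)
  simp only [show 1 - p - 1 = -p by ring,
    show 1 - p + (2 * p - 1) = p by ring] at hbeta hbeta_int
  have hhead := tendsto_integral_Ioc_mul_comp_add_mul_rpow
    ((hK2.mono_measure (Measure.restrict_mono Ioc_subset_Ioi_self le_rfl)).integrable one_le_two)
    hC (by linarith) (by linarith : 2 * p - 1 < p) hbound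
  have htail := tendsto_integral_Ioi_mul_comp_add_mul_rpow hM.le hC hbound hK hbeta_int
    fun s hs => (hprod s hs.le).mono_set (Ioi_subset_Ioi hM.le)
  rw [← hbeta, ← zero_add (c ^ 2 * _)]
  refine (hhead.add htail).congr' ?_
  filter_upwards [eventually_gt_atTop 0] with s hs
  rw [← Ioc_union_Ioi_eq_Ioi hM.le, setIntegral_union (Ioc_disjoint_Ioi le_rfl) measurableSet_Ioi
    ((hprod s hs.le).mono_set Ioc_subset_Ioi_self)
    ((hprod s hs.le).mono_set (Ioi_subset_Ioi hM.le)), add_mul]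

theorem general_kernel_long_range_general (H : ℝ) (hH : H ∈ Set.Ioo (1/2 : ℝ) 1)
    (K : ℝ → ℝ) (hK2 : MemLp K 2 (volume.restrict (Set.Ioi 0)))
    (cZ : ℝ)
    (hKasym : Tendsto (fun t : ℝ => K t * t ^ (3/2 - H)) atTop (𝓝 cZ)) :
    Tendsto (fun s : ℝ => (∫ u in Set.Ioi (0:ℝ), K u * K (u + s)) * s ^ (2 - 2 * H))
      atTop
      (𝓝 (cZ ^ 2 * Real.Gamma (2 - 2 * H) * Real.Gamma (H - 1/2) /
        Real.Gamma (3/2 - H))) := by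
  have h := tendsto_integral_mul_comp_add_mul_rpow hK2
    ⟨by linarith [hH.2], by linarith [hH.1]⟩ hKasym
  rw [show 2 * (3 / 2 - H) - 1 = 2 - 2 * H by ring, show 1 - (3 / 2 - H) = H - 1 / 2 by ring] at h
  convert h using 2
  ring

theorem general_kernel_long_range (H : ℝ) (hH : H ∈ Set.Ioo (1/2 : ℝ) 1)
    (K : ℝ → ℝ) (hK2 : MemLp K 2 (volume.restrict (Set.Ioi 0)))
    (cZ : ℝ) (hcZ : cZ ≠ 0)
    (hKasym : Tendsto (fun t : ℝ => K t * t ^ (3/2 - H)) atTop (𝓝 cZ)) :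
    Tendsto (fun s : ℝ => (∫ u in Set.Ioi (0:ℝ), K u * K (u + s)) * s ^ (2 - 2 * H))
      atTop
      (𝓝 (cZ ^ 2 * Real.Gamma (2 - 2 * H) * Real.Gamma (H - 1/2) /
        Real.Gamma (3/2 - H))) :=
  general_kernel_long_range_general H hH K hK2 cZ hKasym
end
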